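/- Let n ≥ 2, let 1 ≤ k ≤ n and α > 0. Then Γ̃_k = {λ ∈ ℝⁿ : S_m(λ) > 0 for all m = 1, 2, …, k}; that is, λ ∈ Γ_{k−1} with S_k(λ) > 0 if and only if S_m(λ) > 0 for every 1 ≤ m ≤ k. -/

import Mathlib

open scoped BigOperators

/-- The `k`-th elementary symmetric polynomial `σ_k(λ)` of `λ ∈ ℝⁿ`, indexed by `k : ℤ`,
with the conventions `σ₀ = 1` and `σ_k = 0` for `k < 0` or `k > n`. -/
noncomputable def esymmZ (n : ℕ) (k : ℤ) (lam : Fin n → ℝ) : ℝ :=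
  if k < 0 then 0 else ∑ s ∈ Finset.univ.powersetCard k.toNat, ∏ i ∈ s, lam i

/-- `S_k(λ) := σ_k(λ) + α σ_{k-1}(λ)`. -/
noncomputable def SZ (n : ℕ) (α : ℝ) (k : ℤ) (lam : Fin n → ℝ) : ℝ :=
  esymmZ n k lam + α * esymmZ n (k - 1) lam

/-- The Garding cone `Γ_m = {λ ∈ ℝⁿ : σ_j(λ) > 0 for j = 1,…,m}` (so `Γ₀ = ℝⁿ`). -/
def Gamma (n : ℕ) (m : ℕ) : Set (Fin n → ℝ) :=
  {lam | ∀ j : ℕ, 1 ≤ j → j ≤ m → 0 < esymmZ n j lam}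

/-- `Γ̃_k := Γ_{k-1} ∩ {λ : S_k(λ) > 0}`. -/
def GammaTilde (n : ℕ) (α : ℝ) (k : ℕ) : Set (Fin n → ℝ) :=
  Gamma n (k - 1) ∩ {lam | 0 < SZ n α k lam}

/-- `σ_k(λ|i)`: the `k`-th elementary symmetric polynomial of the vector obtained
from `λ` by deleting the entry `λ_i`. -/
noncomputable def esymmDel (n : ℕ) (k : ℤ) (lam : Fin n → ℝ) (i : Fin n) : ℝ :=
  if k < 0 then 0 else
    ∑ s ∈ (Finset.univ.erase i).powersetCard k.toNat, ∏ j ∈ s, lam j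

/-- `S_k(λ|i) := σ_k(λ|i) + α σ_{k-1}(λ|i)`.  In particular
`S_k^{ii}(λ) = ∂S_k/∂λ_i = S_{k-1}(λ|i) = SDel n α (k-1) lam i`. -/
noncomputable def SDel (n : ℕ) (α : ℝ) (k : ℤ) (lam : Fin n → ℝ) (i : Fin n) : ℝ :=
  esymmDel n k lam i + α * esymmDel n (k - 1) lam i

/-- `σ_k(λ|pq)`: the `k`-th elementary symmetric polynomial of the vector obtained
from `λ` by deleting the entries `λ_p` and `λ_q`. -/
noncomputable def esymmDel2 (n : ℕ) (k : ℤ) (lam : Fin n → ℝ) (p q : Fin n) : ℝ :=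
  if k < 0 then 0 else
    ∑ s ∈ ((Finset.univ.erase p).erase q).powersetCard k.toNat, ∏ l ∈ s, lam l

/-- `S_k^{pp,qq}(λ) = ∂²S_k/∂λ_p∂λ_q`, which equals
`σ_{k-2}(λ|pq) + α σ_{k-3}(λ|pq)` for `p ≠ q`, and `0` for `p = q`. -/
noncomputable def Spq (n : ℕ) (α : ℝ) (k : ℤ) (lam : Fin n → ℝ) (p q : Fin n) : ℝ :=
  if p = q then 0 else esymmDel2 n (k - 2) lam p q + α * esymmDel2 n (k - 3) lam p q

/-!
Adjoining `α` to `λ` turns `S_m(λ)` into `σ_m(α, λ)`, so the inclusion `Γ̃_k ⊆ {S_m > 0}` is just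
`S_m = σ_m + α σ_{m-1}` with both terms positive. Conversely, if `σ_j(λ) > 0` but
`σ_{j+1}(λ) ≤ 0` for some `j + 2 ≤ k`, then multiplying `S_{j+2} > 0` by `σ_j` and using
`S_{j+1} > 0` gives `σ_j σ_{j+2} > σ_{j+1}²`, against Newton's inequality. Newton's inequality
`(m+2)(N-m) σ_m σ_{m+2} ≤ (m+1)(N-m-1) σ_{m+1}²` for `N` real numbers is proved by the classical
descent: by Rolle's theorem the roots of the derivative of `∏ (X - λ_i)` are `N - 1` real numbers
with proportional `σ_j`, which lowers `N` down to `m + 2`; there `λ ↦ λ⁻¹` reduces to `m = 0`,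
which is Cauchy–Schwarz.
-/

open Polynomial

namespace Multiset

section CommSemiring

variable {R : Type*} [CommSemiring R]

@[simp]
theorem esymm_zero (s : Multiset R) : s.esymm 0 = 1 := by
  simp [esymm]

theorem esymm_one (s : Multiset R) : s.esymm 1 = s.sum := by
  simp [esymm, powersetCard_one, map_map]

theorem esymm_cons_succ (a : R) (s : Multiset R) (m : ℕ) :
    (a ::ₘ s).esymm (m + 1) = s.esymm (m + 1) + a * s.esymm m := by
  simp [esymm, powersetCard_cons, map_map, sum_map_mul_left]

theorem esymm_eq_zero_of_card_lt {s : Multiset R} {m : ℕ} (h : card s < m) : s.esymm m = 0 := by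
  simp [esymm, powersetCard_eq_empty _ h]

theorem esymm_card (s : Multiset R) : s.esymm (card s) = s.prod := by
  induction s using Multiset.induction_on with
  | empty => simp
  | cons a s ih => simp [esymm_cons_succ, esymm_eq_zero_of_card_lt, ih]

end CommSemiring

theorem sq_sum_eq_sum_sq_add_two_mul_esymm_two {R : Type*} [CommRing R] (s : Multiset R) :
    s.sum ^ 2 = (s.map (· ^ 2)).sum + 2 * s.esymm 2 := by
  induction s using Multiset.induction_on with
  | empty => simp [esymm, powersetCard_zero_right]
  | cons a s ih =>
    rw [esymm_cons_succ, esymm_one, sum_cons, map_cons, sum_cons]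
    linear_combination ih

theorem esymm_eq_prod_mul_esymm_inv {K : Type*} [Field K] {s : Multiset K} (hs : (0 : K) ∉ s)
    {i j : ℕ} (hij : i + j = card s) : s.esymm i = s.prod * (s.map (·⁻¹)).esymm j := by
  induction s using Multiset.induction_on generalizing i j with
  | empty =>
    obtain ⟨rfl, rfl⟩ : i = 0 ∧ j = 0 := by simpa using hij
    simp
  | cons a s ih =>
    have ha : a ≠ 0 := fun h => hs (h ▸ mem_cons_self a s)
    have hs' : (0 : K) ∉ s := fun h => hs (mem_cons_of_mem h)
    rcases i with _ | i
    · rw [zero_add] at hij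
      rw [hij, ← card_map (·⁻¹) (a ::ₘ s), esymm_card, prod_map_inv', esymm_zero,
        mul_inv_cancel₀ (prod_ne_zero hs)]
    rcases j with _ | j
    · rw [add_zero] at hij
      rw [hij, esymm_card, esymm_zero, mul_one]
    rw [esymm_cons_succ, map_cons, esymm_cons_succ, ih hs' (j := j) (by simp at hij; omega),
      ih hs' (j := j + 1) (by simp at hij; omega), prod_cons]
    field_simp
    ring

theorem sq_sum_le_card_mul_sum_sq (s : Multiset ℝ) :
    s.sum ^ 2 ≤ card s * (s.map (· ^ 2)).sum := by
  classical
  have h := _root_.sq_sum_le_card_mul_sum_sq (s := s.toEnumFinset) (f := Prod.fst)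
  rw [Finset.sum_eq_multiset_sum, Finset.sum_eq_multiset_sum] at h
  rwa [← map_toEnumFinset_fst s, map_map, Function.comp_def, card_map, ← Finset.card_def]

theorem two_mul_card_mul_esymm_two_le (s : Multiset ℝ) :
    2 * card s * s.esymm 2 ≤ (card s - 1) * s.esymm 1 ^ 2 := by
  rw [esymm_one]
  nlinarith [sq_sum_le_card_mul_sum_sq s, sq_sum_eq_sum_sq_add_two_mul_esymm_two s]

theorem newton_inequality_of_card_eq {s : Multiset ℝ} {m : ℕ} (hs : card s = m + 2) :
    2 * (m + 2) * (s.esymm m * s.esymm (m + 2)) ≤ (m + 1) * s.esymm (m + 1) ^ 2 := by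
  by_cases h0 : (0 : ℝ) ∈ s
  · rw [← hs, esymm_card, prod_eq_zero h0, mul_zero, mul_zero]
    positivity
  have hv := two_mul_card_mul_esymm_two_le (s.map (·⁻¹))
  rw [card_map, hs] at hv
  rw [esymm_eq_prod_mul_esymm_inv h0 (i := m) (j := 2) (by omega),
    esymm_eq_prod_mul_esymm_inv h0 (i := m + 1) (j := 1) (by omega),
    esymm_eq_prod_mul_esymm_inv h0 (i := m + 2) (j := 0) (by omega), esymm_zero]
  push_cast at hv
  nlinarith [mul_le_mul_of_nonneg_left hv (sq_nonneg s.prod)]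

/-- `t` is the multiset of roots of the derivative of `∏ (X - r)`, real by Rolle's theorem. -/
theorem exists_card_add_one_eq_and_esymm_eq {s : Multiset ℝ} (hs : s ≠ 0) :
    ∃ t : Multiset ℝ, card t + 1 = card s ∧
      ∀ j < card s, (card s : ℝ) * t.esymm j = (card s - j) * s.esymm j := by
  set p : ℝ[X] := (s.map fun r => X - C r).prod
  have hp_deg : p.natDegree = card s := natDegree_multiset_prod_X_sub_C_eq_card s
  have hp_lead : p.leadingCoeff = 1 :=
    (monic_multiset_prod_of_monic _ _ fun r _ => monic_X_sub_C r).leadingCoeff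
  have hs_pos : 0 < card s := card_pos.mpr hs
  have hd_deg : (derivative p).natDegree = card s - 1 := by rw [natDegree_derivative, hp_deg]
  have hd_roots : card (derivative p).roots = (derivative p).natDegree := by
    refine le_antisymm (card_roots' _) ?_
    have := card_roots_le_derivative p
    rw [roots_multiset_prod_X_sub_C] at this
    omega
  refine ⟨(derivative p).roots, by omega, fun j hj => ?_⟩
  have hcoeff := coeff_derivative p (card s - 1 - j)
  rw [coeff_eq_esymm_roots_of_card hd_roots (by omega), prod_X_sub_C_coeff s (by omega),
    leadingCoeff_derivative, hp_lead, hp_deg, hd_deg] at hcoeff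
  have e1 : card s - 1 - (card s - 1 - j) = j := by omega
  have e2 : card s - (card s - 1 - j + 1) = j := by omega
  rw [e1, e2] at hcoeff
  have e3 : ((card s - 1 - j : ℕ) : ℝ) + 1 = card s - j := by
    rw [Nat.cast_sub (by omega), Nat.cast_sub (by omega)]; push_cast; ring
  rw [e3] at hcoeff
  have hsign : ((-1 : ℝ) ^ j) ^ 2 = 1 := by rw [← pow_mul, pow_mul', neg_one_sq, one_pow]
  linear_combination (-1 : ℝ) ^ j * hcoeff
    - (card s * (derivative p).roots.esymm j - (card s - j) * s.esymm j) * hsign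

theorem newton_inequality (s : Multiset ℝ) {m : ℕ} (hm : m + 2 ≤ card s) :
    (m + 2) * (card s - m) * (s.esymm m * s.esymm (m + 2))
      ≤ (m + 1) * (card s - m - 1) * s.esymm (m + 1) ^ 2 := by
  obtain ⟨d, hd⟩ := Nat.exists_eq_add_of_le hm
  induction d generalizing s with
  | zero =>
    have := newton_inequality_of_card_eq hd
    rw [hd]; push_cast
    linarith
  | succ d ih =>
    obtain ⟨t, ht, hts⟩ := exists_card_add_one_eq_and_esymm_eq (s := s) (by
      rintro rfl; simp at hd)
    have IH := ih t (by omega) (by omega)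
    set N : ℝ := (card s : ℝ) with hN
    have hcard : (card t : ℝ) = N - 1 := by rw [hN, ← ht]; push_cast; ring
    rw [hcard] at IH
    have h0 := hts m (by omega)
    have h1 := hts (m + 1) (by omega)
    have h2 := hts (m + 2) (by omega)
    push_cast at h1 h2
    have hgap : (0 : ℝ) < (N - m - 1) * (N - m - 2) := by
      have : (m : ℝ) + 3 ≤ N := by rw [hN, hd]; push_cast; linarith
      nlinarith
    refine le_of_mul_le_mul_left ?_ hgap
    calc (N - m - 1) * (N - m - 2) * ((m + 2) * (N - m) * (s.esymm m * s.esymm (m + 2)))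
        = N ^ 2 * ((m + 2) * (N - 1 - m) * (t.esymm m * t.esymm (m + 2))) := by
          linear_combination (-(m + 2) * (N - 1 - m)) *
            (N * t.esymm m * h2 + (N - m - 2) * s.esymm (m + 2) * h0)
      _ ≤ N ^ 2 * ((m + 1) * (N - 1 - m - 1) * t.esymm (m + 1) ^ 2) := by gcongr
      _ = (N - m - 1) * (N - m - 2) * ((m + 1) * (N - m - 1) * s.esymm (m + 1) ^ 2) := by
          linear_combination (m + 1) * (N - m - 2) *
            (N * t.esymm (m + 1) + (N - m - 1) * s.esymm (m + 1)) * h1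

theorem esymm_mul_esymm_add_two_le_sq (s : Multiset ℝ) (m : ℕ) :
    s.esymm m * s.esymm (m + 2) ≤ s.esymm (m + 1) ^ 2 := by
  rcases lt_or_ge (card s) (m + 2) with hlt | hle
  · rw [esymm_eq_zero_of_card_lt hlt, mul_zero]
    positivity
  have hnewton := newton_inequality s hle
  have hN : (m : ℝ) + 2 ≤ card s := by exact_mod_cast hle
  by_contra! hlt
  have hpos : 0 < s.esymm m * s.esymm (m + 2) := (sq_nonneg _).trans_lt hlt
  have hcoeff : (0 : ℝ) ≤ (m + 1) * (card s - m - 1) := by nlinarith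
  -- `(m + 2) (N - m) = (m + 1) (N - m - 1) + N + 1`
  nlinarith [mul_le_mul_of_nonneg_left hlt.le hcoeff]

theorem esymm_pos_of_forall_esymm_cons_pos {a : ℝ} {s : Multiset ℝ} {k : ℕ}
    (h : ∀ m, 0 < m → m ≤ k → 0 < (a ::ₘ s).esymm m) : ∀ j < k, 0 < s.esymm j
  | 0, _ => by simp
  | j + 1, hj => by
    have hx := esymm_pos_of_forall_esymm_cons_pos h j (by omega)
    have h1 := h (j + 1) (by omega) (by omega)
    have h2 := h (j + 2) (by omega) (by omega)
    rw [esymm_cons_succ] at h1 h2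
    have newton := esymm_mul_esymm_add_two_le_sq s j
    by_contra! hy
    nlinarith [mul_pos h2 hx, mul_nonpos_of_nonpos_of_nonneg hy h1.le]

end Multiset

open Multiset

theorem esymmZ_natCast (n m : ℕ) (lam : Fin n → ℝ) :
    esymmZ n m lam = (Finset.univ.val.map lam).esymm m := by
  rw [esymmZ, if_neg (by omega), Finset.esymm_map_val, Int.toNat_natCast]

theorem SZ_natCast (n : ℕ) (α : ℝ) {m : ℕ} (hm : m ≠ 0) (lam : Fin n → ℝ) :
    SZ n α m lam = (α ::ₘ Finset.univ.val.map lam).esymm m := by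
  obtain ⟨m, rfl⟩ := Nat.exists_eq_succ_of_ne_zero hm
  rw [SZ, esymm_cons_succ, Nat.cast_succ, add_sub_cancel_right, ← Nat.cast_succ,
    esymmZ_natCast, esymmZ_natCast]

theorem mem_Gamma_iff {n m : ℕ} {lam : Fin n → ℝ} :
    lam ∈ Gamma n m ↔ ∀ j ≤ m, 0 < (Finset.univ.val.map lam).esymm j := by
  refine ⟨fun h j hj => ?_, fun h j _ hj => esymmZ_natCast n j lam ▸ h j hj⟩
  rcases j with _ | j
  · simp
  · exact esymmZ_natCast n _ lam ▸ h (j + 1) (by omega) hj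

theorem gammaTilde_eq_all_S_pos_general
    (n : ℕ) (k : ℕ) (hk1 : 1 ≤ k)
    (α : ℝ) (hα : 0 < α) :
    GammaTilde n α k = {lam : Fin n → ℝ | ∀ m : ℕ, 1 ≤ m → m ≤ k → 0 < SZ n α m lam} := by
  ext lam
  set s := Finset.univ.val.map lam
  simp only [GammaTilde, Set.mem_inter_iff, mem_Gamma_iff, Set.mem_ofPred_eq]
  constructor
  · rintro ⟨hσ, hk⟩ m hm hmk
    rcases hmk.eq_or_lt with rfl | hlt
    · exact hk
    obtain ⟨j, rfl⟩ := Nat.exists_eq_add_of_le' hm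
    rw [SZ_natCast n α (by omega), esymm_cons_succ]
    have := hσ (j + 1) (by omega)
    have := hσ j (by omega)
    positivity
  · intro h
    have hcons : ∀ m, 0 < m → m ≤ k → 0 < (α ::ₘ s).esymm m := fun m hm hmk =>
      SZ_natCast n α hm.ne' lam ▸ h m hm hmk
    exact ⟨fun j hj => esymm_pos_of_forall_esymm_cons_pos hcons j (by omega), h k hk1 le_rfl⟩

theorem gammaTilde_eq_all_S_pos
    (n : ℕ) (hn : 2 ≤ n) (k : ℕ) (hk1 : 1 ≤ k) (hk : k ≤ n)
    (α : ℝ) (hα : 0 < α) :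
    GammaTilde n α k = {lam : Fin n → ℝ | ∀ m : ℕ, 1 ≤ m → m ≤ k → 0 < SZ n α m lam} :=
  gammaTilde_eq_all_S_pos_general n k hk1 α hα
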